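/- A generalized bitopological space (X, μ1, μ2) is pairwise T_{1/4} if and only if every finite subset of X is pairwise λ-closed. -/

import Mathlib

open Set

/-- A generalized topology on `X`: contains `∅` and is closed under arbitrary unions. -/
def IsGenTop {X : Type*} (μ : Set (Set X)) : Prop :=
  ∅ ∈ μ ∧ ∀ S ⊆ μ, ⋃₀ S ∈ μ

/-- `A` is μ-closed iff its complement is μ-open. -/
def gClosedSet {X : Type*} (μ : Set (Set X)) (A : Set X) : Prop := Aᶜ ∈ μ

/-- μ-closure: intersection of all μ-closed sets containing `A`. -/
def gCl {X : Type*} (μ : Set (Set X)) (A : Set X) : Set X :=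
  ⋂₀ {F | gClosedSet μ F ∧ A ⊆ F}

/-- `A^∧_μ`: intersection of all μ-open sets containing `A`. -/
def wedgeOp {X : Type*} (μ : Set (Set X)) (A : Set X) : Set X :=
  ⋂₀ {U | U ∈ μ ∧ A ⊆ U}

/-- `A^∨_μ`: union of all μ-closed sets contained in `A`. -/
def veeOp {X : Type*} (μ : Set (Set X)) (A : Set X) : Set X :=
  ⋃₀ {F | gClosedSet μ F ∧ F ⊆ A}

/-- `L` is a `∧_μ`-set. -/
def IsWedgeSet {X : Type*} (μ : Set (Set X)) (L : Set X) : Prop := L = wedgeOp μ L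

/-- `M` is a `∨_μ`-set. -/
def IsVeeSet {X : Type*} (μ : Set (Set X)) (M : Set X) : Prop := M = veeOp μ M

/-- `A` is `g_{μi}`-closed with respect to `μj`. -/
def GClosedWrt {X : Type*} (μi μj : Set (Set X)) (A : Set X) : Prop :=
  ∀ U ∈ μj, A ⊆ U → gCl μi A ⊆ U

/-- `A` is `g_{μi}`-open with respect to `μj`. -/
def GOpenWrt {X : Type*} (μi μj : Set (Set X)) (A : Set X) : Prop :=
  GClosedWrt μi μj Aᶜ

/-- `A` is `λ_{μi}`-closed with respect to `μj`. -/
def LamClosedWrt {X : Type*} (μi μj : Set (Set X)) (A : Set X) : Prop :=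
  ∃ F L : Set X, gClosedSet μi F ∧ IsWedgeSet μj L ∧ A = F ∩ L

/-- `A` is `λ_{μi}`-open with respect to `μj`. -/
def LamOpenWrt {X : Type*} (μi μj : Set (Set X)) (A : Set X) : Prop :=
  LamClosedWrt μi μj Aᶜ

/-- `A` is pairwise `λ`-closed. -/
def PairwiseLamClosed {X : Type*} (μ1 μ2 : Set (Set X)) (A : Set X) : Prop :=
  ∃ F1 F2 L1 L2 : Set X, gClosedSet μ1 F1 ∧ gClosedSet μ2 F2 ∧
    IsWedgeSet μ1 L1 ∧ IsWedgeSet μ2 L2 ∧ A = (F1 ∩ F2) ∩ (L1 ∩ L2)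

def PairwiseT0 {X : Type*} (μ1 μ2 : Set (Set X)) : Prop :=
  ∀ x y : X, x ≠ y →
    (∃ U ∈ μ1, x ∈ U ∧ y ∉ U) ∨ (∃ V ∈ μ2, y ∈ V ∧ x ∉ V)

def PairwiseT1 {X : Type*} (μ1 μ2 : Set (Set X)) : Prop :=
  ∀ x y : X, x ≠ y →
    (∃ U ∈ μ1, x ∈ U ∧ y ∉ U) ∧ (∃ V ∈ μ2, y ∈ V ∧ x ∉ V)

def PairwiseSymmetric {X : Type*} (μ1 μ2 : Set (Set X)) : Prop :=
  ∀ x y : X, (x ∈ gCl μ1 {y} → y ∈ gCl μ2 {x}) ∧ (x ∈ gCl μ2 {y} → y ∈ gCl μ1 {x})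

def PairwiseTHalf {X : Type*} (μ1 μ2 : Set (Set X)) : Prop :=
  (∀ A : Set X, GClosedWrt μ1 μ2 A → gClosedSet μ1 A) ∧
  (∀ A : Set X, GClosedWrt μ2 μ1 A → gClosedSet μ2 A)

def PairwiseR0 {X : Type*} (μ1 μ2 : Set (Set X)) : Prop :=
  (∀ G ∈ μ1, ∀ x ∈ G, gCl μ2 {x} ⊆ G) ∧ (∀ G ∈ μ2, ∀ x ∈ G, gCl μ1 {x} ⊆ G)

def PairwiseLamSymmetric {X : Type*} (μ1 μ2 : Set (Set X)) : Prop :=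
  ∀ A : Set X, PairwiseLamClosed μ1 μ2 A →
    LamClosedWrt μ1 μ2 A ∧ LamClosedWrt μ2 μ1 A

/-- `A` and `B` are μ-weakly separated. -/
def MuWeaklySeparated {X : Type*} (μ : Set (Set X)) (A B : Set X) : Prop :=
  ∃ U ∈ μ, ∃ V ∈ μ, A ⊆ U ∧ B ⊆ V ∧ A ∩ V = ∅ ∧ B ∩ U = ∅

def PairwiseTQuarter {X : Type*} (μ1 μ2 : Set (Set X)) : Prop :=
  ∀ P : Set X, P.Finite → ∀ y ∉ P,
    ∃ A : Set X, P ⊆ A ∧ y ∉ A ∧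
      (A ∈ μ1 ∨ A ∈ μ2 ∨ gClosedSet μ1 A ∨ gClosedSet μ2 A)

def PairwiseTThreeEighths {X : Type*} (μ1 μ2 : Set (Set X)) : Prop :=
  ∀ P : Set X, P.Countable → ∀ y ∉ P,
    ∃ A : Set X, P ⊆ A ∧ y ∉ A ∧
      (A ∈ μ1 ∨ A ∈ μ2 ∨ gClosedSet μ1 A ∨ gClosedSet μ2 A)

def PairwiseTFiveEighths {X : Type*} (μ1 μ2 : Set (Set X)) : Prop :=
  ∀ P : Set X, ∀ y ∉ P,
    ∃ A : Set X, P ⊆ A ∧ y ∉ A ∧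
      (A ∈ μ1 ∨ A ∈ μ2 ∨ gClosedSet μ1 A ∨ gClosedSet μ2 A)

lemma gClosedSet_gCl {X : Type*} {μ : Set (Set X)} (h : IsGenTop μ) (A : Set X) :
    gClosedSet μ (gCl μ A) := by
  rw [gClosedSet, gCl, compl_sInter]
  exact h.2 _ (by rintro _ ⟨F, ⟨hF, -⟩, rfl⟩; exact hF)

lemma isWedgeSet_wedgeOp {X : Type*} (μ : Set (Set X)) (A : Set X) :
    IsWedgeSet μ (wedgeOp μ A) :=
  Subset.antisymm (fun _ hx _ hU => hU.2 hx)
    (fun _ hx U hU => hx U ⟨hU.1, fun _ hy => hy U hU⟩)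

lemma exists_superset_notMem_of_notMem_wedgeOp {X : Type*} {μ : Set (Set X)} {A : Set X} {y : X}
    (hy : y ∉ wedgeOp μ A) : ∃ U ∈ μ, A ⊆ U ∧ y ∉ U := by
  simpa [wedgeOp, and_assoc] using hy

theorem pairwiseLamClosed_iff {X : Type*} {μ1 μ2 : Set (Set X)}
    (h1 : IsGenTop μ1) (h2 : IsGenTop μ2) (P : Set X) :
    PairwiseLamClosed μ1 μ2 P ↔ ∀ y ∉ P, ∃ A : Set X, P ⊆ A ∧ y ∉ A ∧
      (A ∈ μ1 ∨ A ∈ μ2 ∨ gClosedSet μ1 A ∨ gClosedSet μ2 A) := by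
  constructor
  · rintro ⟨F1, F2, L1, L2, hF1, hF2, hL1, hL2, rfl⟩ y hy
    simp only [mem_inter_iff, not_and_or] at hy
    rcases hy with (hy | hy) | hy | hy
    · exact ⟨F1, fun _ hx => hx.1.1, hy, .inr (.inr (.inl hF1))⟩
    · exact ⟨F2, fun _ hx => hx.1.2, hy, .inr (.inr (.inr hF2))⟩
    · rw [hL1] at hy
      obtain ⟨U, hU, hLU, hyU⟩ := exists_superset_notMem_of_notMem_wedgeOp hy
      exact ⟨U, fun _ hx => hLU hx.2.1, hyU, .inl hU⟩
    · rw [hL2] at hy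
      obtain ⟨U, hU, hLU, hyU⟩ := exists_superset_notMem_of_notMem_wedgeOp hy
      exact ⟨U, fun _ hx => hLU hx.2.2, hyU, .inr (.inl hU)⟩
  · intro hsep
    -- the μi-closures and μi-kernels of `P` always serve as witnesses
    refine ⟨gCl μ1 P, gCl μ2 P, wedgeOp μ1 P, wedgeOp μ2 P, gClosedSet_gCl h1 P,
      gClosedSet_gCl h2 P, isWedgeSet_wedgeOp μ1 P, isWedgeSet_wedgeOp μ2 P,
      Subset.antisymm (fun x hx => ⟨⟨fun _ hF => hF.2 hx, fun _ hF => hF.2 hx⟩,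
        fun _ hU => hU.2 hx, fun _ hU => hU.2 hx⟩) fun y hy => ?_⟩
    by_contra hyP
    obtain ⟨A, hPA, hyA, hA | hA | hA | hA⟩ := hsep y hyP
    · exact hyA (hy.2.1 A ⟨hA, hPA⟩)
    · exact hyA (hy.2.2 A ⟨hA, hPA⟩)
    · exact hyA (hy.1.1 A ⟨hA, hPA⟩)
    · exact hyA (hy.1.2 A ⟨hA, hPA⟩)

theorem stmt16 {X : Type*} (μ1 μ2 : Set (Set X))
    (h1 : IsGenTop μ1) (h2 : IsGenTop μ2) :
    PairwiseTQuarter μ1 μ2 ↔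
      ∀ P : Set X, P.Finite → PairwiseLamClosed μ1 μ2 P :=
  forall₂_congr fun P _ => (pairwiseLamClosed_iff h1 h2 P).symm
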